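/- Suppose q is not proportional to q_κ*: for every real number A there exists u > 0 with q(u) ≠ A·q_κ*(u). Then q changes sign infinitely often: for every u > 0 there exist s ≥ u and t ≥ u with q(s) > 0 and q(t) < 0. -/

import Mathlib

/-!
For a function `f` put `Φ f (u) = u f(u) + κ ∫_u^{u+1} f`. The differential equation says exactly
that `Φ q` is constant, say `c`; writing `q_κ*` as a Laplace transform, Fubini and an integration
by parts give `Φ q_κ* ≡ 1`. If `q ≥ 0` on `[u₀, ∞)`, then `0 ≤ u q(u) ≤ c` there, so
`g = q - c q_κ*` solves the homogeneous equation `u g(u) + κ ∫_u^{u+1} g = 0` with `u g(u)`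
bounded. For `u ≥ 2κ` the equation halves any bound on `u g(u)`, so `g` vanishes near infinity;
the equation evaluated where `|g|` is maximal on a short interval below the zero set of `g`
then pushes the zero set down to all of `(0, ∞)`. Hence `q = c q_κ*`. The case `q ≤ 0` follows
by applying this to `-q`.
-/

open MeasureTheory Filter Set

/-- The solution `q_κ*(u) = ∫_0^∞ exp(−u x − κ ∫_0^x (1 − e^{−t})/t dt) dx`. -/
noncomputable def qkstar (κ : ℝ) (u : ℝ) : ℝ :=
  ∫ x in Set.Ioi (0 : ℝ),
    Real.exp (-(u * x) - κ * ∫ t in (0 : ℝ)..x, (1 - Real.exp (-t)) / t)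

open Real Topology

/-- `(1 - e^{-t}) / t`, with the value `1` at the removable singularity `t = 0` (where the
quotient itself is the junk value `0`). -/
noncomputable def expSlope : ℝ → ℝ := dslope (fun t => -exp (-t)) 0

lemma expSlope_of_ne {t : ℝ} (ht : t ≠ 0) : expSlope t = (1 - exp (-t)) / t := by
  rw [expSlope, dslope_of_ne _ ht, slope_def_field, neg_zero, exp_zero, sub_zero]
  ring

@[fun_prop]
lemma continuous_expSlope : Continuous expSlope := by
  refine continuous_iff_continuousAt.2 fun t => ?_
  rcases eq_or_ne t 0 with rfl | ht
  · exact continuousAt_dslope_same.2 (by fun_prop)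
  · exact (continuousAt_dslope_of_ne ht).2 (by fun_prop)

lemma expSlope_zero : expSlope 0 = 1 := by
  rw [expSlope, dslope_same]
  simpa using ((hasDerivAt_neg 0).exp.neg).deriv

lemma expSlope_nonneg {t : ℝ} (ht : 0 ≤ t) : 0 ≤ expSlope t := by
  rcases ht.eq_or_lt with rfl | ht
  · simp [expSlope_zero]
  · rw [expSlope_of_ne ht.ne']
    exact div_nonneg (by simpa using exp_le_one_iff.2 (neg_nonpos.2 ht.le)) ht.le

lemma expSlope_le_one {t : ℝ} (ht : 0 ≤ t) : expSlope t ≤ 1 := by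
  rcases ht.eq_or_lt with rfl | ht
  · simp [expSlope_zero]
  · rw [expSlope_of_ne ht.ne', div_le_one ht]
    linarith [add_one_le_exp (-t)]

noncomputable def qkWeight (κ x : ℝ) : ℝ := exp (-(κ * ∫ t in (0 : ℝ)..x, expSlope t))

variable {κ u x : ℝ}

lemma hasDerivAt_qkWeight (κ x : ℝ) :
    HasDerivAt (qkWeight κ) (-(κ * expSlope x) * qkWeight κ x) x := by
  rw [mul_comm]
  exact ((continuous_expSlope.integral_hasStrictDerivAt 0 x).hasDerivAt.const_mul κ).fun_neg.exp

@[fun_prop]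
lemma continuous_qkWeight (κ : ℝ) : Continuous (qkWeight κ) :=
  continuous_iff_continuousAt.2 fun x => (hasDerivAt_qkWeight κ x).continuousAt

lemma qkWeight_zero (κ : ℝ) : qkWeight κ 0 = 1 := by simp [qkWeight]

lemma qkWeight_pos (κ x : ℝ) : 0 < qkWeight κ x := exp_pos _

lemma qkWeight_le_one (hκ : 0 ≤ κ) (hx : 0 ≤ x) : qkWeight κ x ≤ 1 := by
  refine exp_le_one_iff.2 (neg_nonpos.2 (mul_nonneg hκ ?_))
  exact intervalIntegral.integral_nonneg hx fun t ht => expSlope_nonneg ht.1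

lemma qkstar_eq_integral (κ u : ℝ) :
    qkstar κ u = ∫ x in Ioi (0 : ℝ), exp (-(u * x)) * qkWeight κ x := by
  refine setIntegral_congr_fun measurableSet_Ioi fun x (hx : 0 < x) => ?_
  have : ∫ t in (0 : ℝ)..x, (1 - exp (-t)) / t = ∫ t in (0 : ℝ)..x, expSlope t :=
    intervalIntegral.integral_congr_ae (.of_forall fun t ht =>
      (expSlope_of_ne (uIoc_of_le hx.le ▸ ht).1.ne').symm)
  rw [qkWeight, this, sub_eq_add_neg, exp_add]

lemma integrableOn_exp_neg_mul (hu : 0 < u) : IntegrableOn (fun x => exp (-(u * x))) (Ioi 0) := by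
  simpa only [neg_mul] using exp_neg_integrableOn_Ioi 0 hu

lemma integrableOn_exp_neg_mul_of_bounded {g : ℝ → ℝ} {C : ℝ} (hu : 0 < u) (hg : Continuous g)
    (hC : ∀ x, 0 < x → |g x| ≤ C) : IntegrableOn (fun x => exp (-(u * x)) * g x) (Ioi 0) :=
  (integrableOn_exp_neg_mul hu).mul_bdd hg.aestronglyMeasurable
    ((ae_restrict_mem measurableSet_Ioi).mono hC)

lemma integrableOn_exp_neg_mul_qkWeight (hκ : 0 ≤ κ) (hu : 0 < u) :
    IntegrableOn (fun x => exp (-(u * x)) * qkWeight κ x) (Ioi 0) :=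
  integrableOn_exp_neg_mul_of_bounded hu (continuous_qkWeight κ) fun x hx => by
    rw [abs_of_pos (qkWeight_pos κ x)]; exact qkWeight_le_one hκ hx.le

lemma qkstar_nonneg (κ u : ℝ) : 0 ≤ qkstar κ u := by
  rw [qkstar_eq_integral]
  exact setIntegral_nonneg measurableSet_Ioi fun x _ => (mul_pos (exp_pos _) (qkWeight_pos κ x)).le

lemma integral_exp_neg_mul_Ioi (hu : 0 < u) : ∫ x in Ioi (0 : ℝ), exp (-(u * x)) = u⁻¹ := by
  simpa [neg_mul] using integral_exp_mul_Ioi (neg_neg_of_pos hu) 0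

lemma qkstar_le_inv (hκ : 0 ≤ κ) (hu : 0 < u) : qkstar κ u ≤ u⁻¹ := by
  rw [qkstar_eq_integral, ← integral_exp_neg_mul_Ioi hu]
  refine setIntegral_mono_on (integrableOn_exp_neg_mul_qkWeight hκ hu)
    (integrableOn_exp_neg_mul hu) measurableSet_Ioi fun x hx => ?_
  exact mul_le_of_le_one_right (exp_pos _).le (qkWeight_le_one hκ (le_of_lt hx))

lemma continuousOn_qkstar (hκ : 0 ≤ κ) : ContinuousOn (qkstar κ) (Ioi 0) := by
  intro u (hu : 0 < u)
  rw [show qkstar κ = _ from funext (qkstar_eq_integral κ)]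
  refine (continuousAt_of_dominated (bound := fun x => exp (-(u / 2 * x))) ?_ ?_
    (integrableOn_exp_neg_mul (half_pos hu)) ?_).continuousWithinAt
  · exact .of_forall fun v => (by fun_prop : Continuous _).aestronglyMeasurable
  · filter_upwards [Ioi_mem_nhds (half_lt_self hu)] with v (hv : u / 2 < v)
    filter_upwards [ae_restrict_mem measurableSet_Ioi] with x (hx : 0 < x)
    rw [norm_mul, norm_of_nonneg (exp_pos _).le, norm_of_nonneg (qkWeight_pos κ x).le]
    calc exp (-(v * x)) * qkWeight κ x ≤ exp (-(v * x)) :=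
          mul_le_of_le_one_right (exp_pos _).le (qkWeight_le_one hκ hx.le)
      _ ≤ exp (-(u / 2 * x)) := exp_le_exp.2 (by nlinarith)
  · exact .of_forall fun x => by fun_prop

lemma integral_exp_neg_mul_eq_expSlope (hx : x ≠ 0) (u : ℝ) :
    ∫ v in u..u + 1, exp (-(v * x)) = exp (-(u * x)) * expSlope x := by
  rw [intervalIntegral.integral_comp_mul_right (fun y => exp (-y)) hx, expSlope_of_ne hx]
  simp only [intervalIntegral.integral_comp_neg, integral_exp, smul_eq_mul]
  rw [show -((u + 1) * x) = -(u * x) + -x by ring, exp_add]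
  field_simp

lemma intervalIntegral_qkstar (hκ : 0 ≤ κ) (hu : 0 < u) :
    ∫ v in u..u + 1, qkstar κ v =
      ∫ x in Ioi (0 : ℝ), exp (-(u * x)) * (expSlope x * qkWeight κ x) := by
  simp_rw [qkstar_eq_integral]
  rw [intervalIntegral_integral_swap]
  · refine setIntegral_congr_fun measurableSet_Ioi fun x (hx : 0 < x) => ?_
    rw [intervalIntegral.integral_mul_const, integral_exp_neg_mul_eq_expSlope hx.ne', mul_assoc]
  · rw [uIoc_of_le (by linarith)]
    have hdom := (integrable_const (μ := volume.restrict (Ioc u (u + 1))) (1 : ℝ)).mul_prod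
      (integrableOn_exp_neg_mul_qkWeight hκ hu)
    rw [Measure.prod_restrict] at hdom ⊢
    refine hdom.mono' (by fun_prop : Continuous _).aestronglyMeasurable ?_
    filter_upwards [ae_restrict_mem (measurableSet_Ioc.prod measurableSet_Ioi)] with z ⟨hz₁, hz₂⟩
    rw [Function.uncurry_apply_pair, norm_mul, norm_of_nonneg (exp_pos _).le,
      norm_of_nonneg (qkWeight_pos κ _).le, one_mul]
    exact mul_le_mul_of_nonneg_right (exp_le_exp.2 (by nlinarith [hz₁.1, hz₂.out]))
      (qkWeight_pos κ _).le

lemma tendsto_exp_neg_mul_qkWeight (hκ : 0 ≤ κ) (hu : 0 < u) :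
    Tendsto (fun x => exp (-(u * x)) * qkWeight κ x) atTop (𝓝 0) := by
  refine squeeze_zero' (.of_forall fun x => (mul_pos (exp_pos _) (qkWeight_pos κ x)).le) ?_
    (tendsto_exp_atBot.comp (tendsto_neg_atTop_atBot.comp (tendsto_id.const_mul_atTop hu)))
  filter_upwards [eventually_ge_atTop 0] with x hx
  exact mul_le_of_le_one_right (exp_pos _).le (qkWeight_le_one hκ hx)

lemma mul_qkstar_add_integral_expSlope (hκ : 0 ≤ κ) (hu : 0 < u) :
    u * qkstar κ u + κ * ∫ x in Ioi (0 : ℝ), exp (-(u * x)) * (expSlope x * qkWeight κ x) = 1 := by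
  have hderiv : ∀ x ∈ Ici (0 : ℝ), HasDerivAt (fun x => -(exp (-(u * x)) * qkWeight κ x))
      (u * (exp (-(u * x)) * qkWeight κ x) +
        κ * (exp (-(u * x)) * (expSlope x * qkWeight κ x))) x := fun x _ => by
    refine ((((hasDerivAt_id' x).const_mul u).fun_neg.exp.mul
      (hasDerivAt_qkWeight κ x)).fun_neg).congr_deriv ?_
    ring
  have hint₁ := integrableOn_exp_neg_mul_qkWeight hκ hu
  have hint₂ : IntegrableOn (fun x => exp (-(u * x)) * (expSlope x * qkWeight κ x)) (Ioi 0) :=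
    integrableOn_exp_neg_mul_of_bounded hu (by fun_prop) fun x hx => by
      rw [abs_of_nonneg (mul_nonneg (expSlope_nonneg hx.le) (qkWeight_pos κ x).le)]
      exact mul_le_one₀ (expSlope_le_one hx.le) (qkWeight_pos κ x).le (qkWeight_le_one hκ hx.le)
  have := integral_Ioi_of_hasDerivAt_of_tendsto' hderiv
    ((hint₁.const_mul u).add (hint₂.const_mul κ)) (tendsto_exp_neg_mul_qkWeight hκ hu).neg
  rw [integral_add (hint₁.const_mul u) (hint₂.const_mul κ), integral_const_mul,
    integral_const_mul] at this
  simpa [qkstar_eq_integral, qkWeight_zero] using this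

lemma qkstar_functional_eq (hκ : 0 ≤ κ) (hu : 0 < u) :
    u * qkstar κ u + κ * ∫ v in u..u + 1, qkstar κ v = 1 := by
  rw [intervalIntegral_qkstar hκ hu, mul_qkstar_add_integral_expSlope hκ hu]

lemma ContinuousOn.intervalIntegrable_of_pos {f : ℝ → ℝ} (hf : ContinuousOn f (Ioi 0))
    {a b : ℝ} (ha : 0 < a) (hb : 0 < b) : IntervalIntegrable f volume a b :=
  (hf.mono fun _ hx => (lt_min ha hb).trans_le hx.1).intervalIntegrable

lemma hasDerivAt_integral_add_one {f : ℝ → ℝ} (hf : ContinuousOn f (Ioi 0)) (hu : 0 < u) :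
    HasDerivAt (fun w => ∫ v in w..w + 1, f v) (f (u + 1) - f u) u := by
  have hprim : ∀ w, 0 < w → HasDerivAt (fun w => ∫ v in u / 2..w, f v) (f w) w := fun w hw =>
    intervalIntegral.integral_hasDerivAt_right (hf.intervalIntegrable_of_pos (half_pos hu) hw)
      (hf.stronglyMeasurableAtFilter isOpen_Ioi w hw) (hf.continuousAt (Ioi_mem_nhds hw))
  have hshift := (hprim (u + 1) (by linarith)).comp_add_const u 1
  refine (hshift.sub (hprim u hu)).congr_of_eventuallyEq ?_
  filter_upwards [Ioi_mem_nhds (half_lt_self hu)] with w (hw : u / 2 < w)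
  exact (intervalIntegral.integral_interval_sub_left
    (hf.intervalIntegrable_of_pos (half_pos hu) (by linarith))
    (hf.intervalIntegrable_of_pos (half_pos hu) (by linarith))).symm

lemma exists_mul_add_integral_eq_const {q : ℝ → ℝ}
    (hdiff : ∀ u : ℝ, 0 < u → DifferentiableAt ℝ q u)
    (heq : ∀ u : ℝ, 0 < u → u * deriv q u = (κ - 1) * q u - κ * q (u + 1)) :
    ∃ c, ∀ u, 0 < u → u * q u + κ * ∫ v in u..u + 1, q v = c := by
  have hq : ContinuousOn q (Ioi 0) := fun x hx => (hdiff x hx).continuousAt.continuousWithinAt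
  have hderiv : ∀ u, 0 < u → HasDerivAt (fun w => w * q w + κ * ∫ v in w..w + 1, q v) 0 u := by
    intro u hu
    refine (((hasDerivAt_id' u).mul (hdiff u hu).hasDerivAt).add
      ((hasDerivAt_integral_add_one hq hu).const_mul κ)).congr_deriv ?_
    linear_combination heq u hu
  exact isOpen_Ioi.exists_is_const_of_deriv_eq_zero isPreconnected_Ioi
    (fun u hu => (hderiv u hu).differentiableAt.differentiableWithinAt)
    fun u hu => (hderiv u hu).deriv

section HomogeneousEquation

variable {g : ℝ → ℝ}

lemma eqOn_zero_Ici_of_abs_mul_le (hκ : 0 ≤ κ)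
    (hrel : ∀ u, 0 < u → u * g u + κ * ∫ v in u..u + 1, g v = 0) {u₀ C : ℝ} (hu₀ : 0 < u₀)
    (hbound : ∀ u, u₀ ≤ u → |u * g u| ≤ C) : EqOn g 0 (Ici (max u₀ (2 * κ))) := by
  have hpos : ∀ u ∈ Ici (max u₀ (2 * κ)), 0 < u := fun u hu =>
    hu₀.trans_le ((le_max_left _ _).trans hu)
  -- each unit-length window halves the bound, because `κ / u ≤ 1 / 2` there
  have halving : ∀ n : ℕ, ∀ u ∈ Ici (max u₀ (2 * κ)), |u * g u| ≤ C / 2 ^ n := by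
    intro n
    induction n with
    | zero => exact fun u hu => by simpa using hbound u ((le_max_left _ _).trans hu)
    | succ n ih =>
      intro u hu
      have hu' := hpos u hu
      have hwindow : ∀ v ∈ uIoc u (u + 1), ‖g v‖ ≤ C / 2 ^ n / u := by
        intro v hv
        rw [uIoc_of_le (by linarith)] at hv
        have hv' : v ∈ Ici (max u₀ (2 * κ)) := le_trans hu hv.1.le
        have hgv := ih v hv'
        rw [abs_mul, abs_of_pos (hpos v hv')] at hgv
        rw [norm_eq_abs, le_div_iff₀ hu']
        nlinarith [abs_nonneg (g v), hv.1]
      have hint := intervalIntegral.norm_integral_le_of_norm_le_const hwindow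
      rw [add_sub_cancel_left, abs_one, mul_one, norm_eq_abs] at hint
      have h2κ : 2 * κ ≤ u := (le_max_right _ _).trans hu
      have hC : 0 ≤ C / 2 ^ n := (abs_nonneg _).trans (ih u hu)
      calc |u * g u| = κ * |∫ v in u..u + 1, g v| := by
            rw [eq_neg_of_add_eq_zero_left (hrel u hu'), abs_neg, abs_mul, abs_of_nonneg hκ]
        _ ≤ κ * (C / 2 ^ n / u) := mul_le_mul_of_nonneg_left hint hκ
        _ ≤ C / 2 ^ (n + 1) := by
            rw [pow_succ, ← div_div, mul_div_assoc', div_le_div_iff₀ hu' two_pos]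
            nlinarith
  intro u hu
  have hlim : Tendsto (fun n : ℕ => C / 2 ^ n) atTop (𝓝 0) :=
    tendsto_const_nhds.div_atTop (tendsto_pow_atTop_atTop_of_one_lt one_lt_two)
  have := le_antisymm (ge_of_tendsto' hlim fun n => halving n u hu) (abs_nonneg _)
  simpa [(hpos u hu).ne'] using this

lemma eqOn_zero_Ici_of_eqOn_zero_Ici (hκ : 0 ≤ κ) (hg : ContinuousOn g (Ioi 0))
    (hrel : ∀ u, 0 < u → u * g u + κ * ∫ v in u..u + 1, g v = 0) {a b : ℝ} (ha : 0 < a)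
    (hab : a ≤ b) (hba : b ≤ a + 1) (hκab : κ * (b - a) < a) (hb : EqOn g 0 (Ici b)) :
    EqOn g 0 (Ici a) := by
  have hIcc : Icc a b ⊆ Ioi 0 := fun x hx => ha.trans_le hx.1
  obtain ⟨t, ht, htmax⟩ := isCompact_Icc.exists_isMaxOn (nonempty_Icc.2 hab)
    (hg.mono hIcc).abs
  have ht₀ : 0 < t := hIcc ht
  -- at a maximum `t` of `|g|` on `[a, b]`: `t |g t| = κ |∫_t^b g| ≤ κ (b - a) |g t| < a |g t|`
  -- unless `g t = 0`
  have hwindow : ∫ v in t..t + 1, g v = ∫ v in t..b, g v := by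
    have hzero : ∫ v in b..t + 1, g v = 0 := by
      rw [intervalIntegral.integral_congr (g := 0) fun v hv =>
        hb ((uIcc_of_le (by linarith [ht.1] : b ≤ t + 1) ▸ hv).1)]
      simp
    rw [← intervalIntegral.integral_add_adjacent_intervals
      (hg.intervalIntegrable_of_pos ht₀ (ha.trans_le hab))
      (hg.intervalIntegrable_of_pos (ha.trans_le hab) (by linarith)), hzero, add_zero]
  have hbound : |∫ v in t..b, g v| ≤ |g t| * (b - a) := by
    have := intervalIntegral.norm_integral_le_of_norm_le_const (f := g) (C := |g t|) fun v hv =>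
      htmax.out ⟨ht.1.trans (uIoc_of_le ht.2 ▸ hv).1.le, (uIoc_of_le ht.2 ▸ hv).2⟩
    rw [norm_eq_abs, abs_of_nonneg (sub_nonneg.2 ht.2)] at this
    exact this.trans (mul_le_mul_of_nonneg_left (by linarith [ht.1]) (abs_nonneg _))
  have hgt : |g t| = 0 := by
    have hmul : t * |g t| = κ * |∫ v in t..b, g v| := by
      rw [← hwindow, ← abs_of_nonneg hκ, ← abs_mul, ← neg_eq_of_add_eq_zero_right (hrel t ht₀),
        abs_neg, abs_mul, abs_of_pos ht₀]
    nlinarith [abs_nonneg (g t), mul_le_mul_of_nonneg_left hbound hκ, ht.1]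
  intro v (hv : a ≤ v)
  rcases le_total v b with hvb | hbv
  · exact abs_nonpos_iff.1 (hgt ▸ htmax ⟨hv, hvb⟩)
  · exact hb hbv

lemma eqOn_zero_Ioi_of_eqOn_zero_Ici (hκ : 0 ≤ κ) (hg : ContinuousOn g (Ioi 0))
    (hrel : ∀ u, 0 < u → u * g u + κ * ∫ v in u..u + 1, g v = 0) {b : ℝ}
    (hb : EqOn g 0 (Ici b)) : EqOn g 0 (Ioi 0) := by
  intro w (hw : 0 < w)
  -- a step length `ε` that works uniformly for every step `[a, a + ε]` with `w ≤ a`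
  set ε := min 1 (w / (κ + 1))
  have hε : 0 < ε := lt_min one_pos (by positivity)
  have hκε : κ * ε < w := calc
    κ * ε ≤ κ * (w / (κ + 1)) := mul_le_mul_of_nonneg_left (min_le_right _ _) hκ
    _ < w := by rw [mul_div_assoc', div_lt_iff₀ (by linarith)]; nlinarith
  have hsteps : ∀ n : ℕ, EqOn g 0 (Ici (max w (b - n * ε))) := by
    intro n
    induction n with
    | zero => exact hb.mono (Ici_subset_Ici.2 (by simp))
    | succ n ih =>
      have hstep : max w (b - n * ε) ≤ max w (b - (n + 1 : ℕ) * ε) + ε := by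
        push_cast
        exact max_le (by linarith [le_max_left w (b - (n + 1) * ε)])
          (by linarith [le_max_right w (b - (n + 1) * ε)])
      refine eqOn_zero_Ici_of_eqOn_zero_Ici hκ hg hrel (hw.trans_le (le_max_left _ _))
        (max_le_max le_rfl (by push_cast; linarith)) (by linarith [min_le_left 1 (w / (κ + 1))])
        ?_ ih
      nlinarith [le_max_left w (b - (n + 1 : ℕ) * ε)]
  obtain ⟨n, hn⟩ := exists_nat_gt ((b - w) / ε)
  rw [div_lt_iff₀ hε] at hn
  exact hsteps n (max_le le_rfl (by linarith) : max w (b - n * ε) ≤ w)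

end HomogeneousEquation

lemma eqOn_const_mul_qkstar_of_nonneg {q : ℝ → ℝ} {c u₀ : ℝ} (hκ : 0 ≤ κ)
    (hq : ContinuousOn q (Ioi 0)) (hc : ∀ u, 0 < u → u * q u + κ * ∫ v in u..u + 1, q v = c)
    (hu₀ : 0 < u₀) (hnonneg : ∀ u, u₀ ≤ u → 0 ≤ q u) :
    EqOn q (fun u => c * qkstar κ u) (Ioi 0) := by
  set g := fun u => q u - c * qkstar κ u
  have hqstar := continuousOn_qkstar hκ
  have hg : ContinuousOn g (Ioi 0) := hq.sub (continuousOn_const.mul hqstar)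
  have hrel : ∀ u, 0 < u → u * g u + κ * ∫ v in u..u + 1, g v = 0 := by
    intro u hu
    have hu₁ : 0 < u + 1 := by linarith
    rw [intervalIntegral.integral_sub (hq.intervalIntegrable_of_pos hu hu₁)
      ((hqstar.intervalIntegrable_of_pos hu hu₁).const_mul c), intervalIntegral.integral_const_mul]
    linear_combination hc u hu - c * qkstar_functional_eq hκ hu
  have hintegral_nonneg : ∀ u, u₀ ≤ u → 0 ≤ ∫ v in u..u + 1, q v := fun u hu =>
    intervalIntegral.integral_nonneg (by linarith) fun v hv => hnonneg v (hu.trans hv.1)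
  have hc₀ : 0 ≤ c := by
    rw [← hc u₀ hu₀]
    exact add_nonneg (mul_nonneg hu₀.le (hnonneg u₀ le_rfl))
      (mul_nonneg hκ (hintegral_nonneg u₀ le_rfl))
  -- both `u * q u` and `u * (c * qkstar κ u)` lie in `[0, c]`
  have hbound : ∀ u, u₀ ≤ u → |u * g u| ≤ c := by
    intro u hu
    have hu' := hu₀.trans_le hu
    have hq₁ : 0 ≤ u * q u := mul_nonneg hu'.le (hnonneg u hu)
    have hq₂ : u * q u ≤ c := by
      nlinarith [hc u hu', mul_nonneg hκ (hintegral_nonneg u hu)]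
    have hs₁ : 0 ≤ u * qkstar κ u := mul_nonneg hu'.le (qkstar_nonneg κ u)
    have hs₂ : u * qkstar κ u ≤ 1 := by
      simpa [hu'.ne'] using mul_le_mul_of_nonneg_left (qkstar_le_inv hκ hu') hu'.le
    rw [abs_le]
    constructor <;> nlinarith
  intro u hu
  exact sub_eq_zero.1 (eqOn_zero_Ioi_of_eqOn_zero_Ici hκ hg hrel
    (eqOn_zero_Ici_of_abs_mul_le hκ hrel hu₀ hbound) hu)

theorem stmt9 (κ : ℝ) (hκ : 0 < κ) (q : ℝ → ℝ)
    (hdiff : ∀ u : ℝ, 0 < u → DifferentiableAt ℝ q u)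
    (heq : ∀ u : ℝ, 0 < u → u * deriv q u = (κ - 1) * q u - κ * q (u + 1))
    (hnp : ∀ A : ℝ, ∃ u : ℝ, 0 < u ∧ q u ≠ A * qkstar κ u) :
    ∀ u : ℝ, 0 < u →
      (∃ s : ℝ, u ≤ s ∧ 0 < q s) ∧ (∃ t : ℝ, u ≤ t ∧ q t < 0) := by
  intro u hu
  obtain ⟨c, hc⟩ := exists_mul_add_integral_eq_const hdiff heq
  have hq : ContinuousOn q (Ioi 0) := fun x hx => (hdiff x hx).continuousAt.continuousWithinAt
  obtain ⟨x, hx, hne⟩ := hnp c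
  constructor
  · by_contra! hnonpos
    have hc' : ∀ v, 0 < v → v * -q v + κ * ∫ w in v..v + 1, -q w = -c := fun v hv => by
      rw [intervalIntegral.integral_neg]; linear_combination -hc v hv
    have := eqOn_const_mul_qkstar_of_nonneg hκ.le hq.neg hc' hu
      (fun v hv => neg_nonneg.2 (hnonpos v hv)) hx
    exact hne (by simpa using this)
  · by_contra! hnonneg
    exact hne (eqOn_const_mul_qkstar_of_nonneg hκ.le hq hc hu hnonneg hx)
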